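/- arXiv:2309.10223 — 4 statements merged into one kernel-verified Lean document; each statement's English description precedes it below -/
import Mathlib

section
/- Let f be differentiable and strictly increasing on [t₁, t₃] with f(t₁) ≥ 0, and let t₁ < t₂ < t₃. Set Δf₁ = f(t₂) - f(t₁), Δf₂ = f(t₃) - f(t₂), I₁ = ∫_{t₁}^{t₂} f, I₂ = ∫_{t₂}^{t₃} f. Suppose 0 < m ≤ f'(t) ≤ M on [t₁, t₃]. Then I₂/Δf₂ - I₁/Δf₁ ≥ f(t₂)/M + (m/(2M))(t₃ - t₂) - f(t₁)/m - (M/(2m))(t₂ - t₁). -/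
open Set MeasureTheory intervalIntegral

/-- Lower bound on the difference of normalized consecutive integrals of an increasing
function with derivative in `[m, M]`. -/
theorem normalized_integral_difference_bound
    (t₁ t₂ t₃ m M : ℝ) (h12 : t₁ < t₂) (h23 : t₂ < t₃)
    (hm : 0 < m) (hmM : m ≤ M)
    (f f' : ℝ → ℝ)
    (hf0 : 0 ≤ f t₁)
    (hmono : StrictMonoOn f (Icc t₁ t₃))
    (hderiv : ∀ t ∈ Icc t₁ t₃, HasDerivAt f (f' t) t)
    (hbound : ∀ t ∈ Icc t₁ t₃, m ≤ f' t ∧ f' t ≤ M) :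
    (∫ s in t₂..t₃, f s) / (f t₃ - f t₂) - (∫ s in t₁..t₂, f s) / (f t₂ - f t₁) ≥
      f t₂ / M + (m / (2 * M)) * (t₃ - t₂) - f t₁ / m - (M / (2 * m)) * (t₂ - t₁) := by
  have hM : 0 < M := lt_of_lt_of_le hm hmM
  have h13 : t₁ < t₃ := h12.trans h23
  have ht1 : t₁ ∈ Icc t₁ t₃ := ⟨le_refl _, h13.le⟩
  have ht2 : t₂ ∈ Icc t₁ t₃ := ⟨h12.le, h23.le⟩
  have ht3 : t₃ ∈ Icc t₁ t₃ := ⟨h13.le, le_refl _⟩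
  have hc : ContinuousOn f (Icc t₁ t₃) :=
    fun t ht => (hderiv t ht).continuousAt.continuousWithinAt
  have hdiff : DifferentiableOn ℝ f (interior (Icc t₁ t₃)) := fun x hx =>
    (hderiv x (interior_subset hx)).differentiableAt.differentiableWithinAt
  have hlo : ∀ x ∈ interior (Icc t₁ t₃), m ≤ deriv f x := by
    intro x hx
    rw [(hderiv x (interior_subset hx)).deriv]
    exact (hbound x (interior_subset hx)).1
  have hhi : ∀ x ∈ interior (Icc t₁ t₃), deriv f x ≤ M := by
    intro x hx
    rw [(hderiv x (interior_subset hx)).deriv]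
    exact (hbound x (interior_subset hx)).2
  have hLB : ∀ x ∈ Icc t₁ t₃, ∀ y ∈ Icc t₁ t₃, x ≤ y → m * (y - x) ≤ f y - f x :=
    (convex_Icc t₁ t₃).mul_sub_le_image_sub_of_le_deriv hc hdiff hlo
  have hUB : ∀ x ∈ Icc t₁ t₃, ∀ y ∈ Icc t₁ t₃, x ≤ y → f y - f x ≤ M * (y - x) :=
    (convex_Icc t₁ t₃).image_sub_le_mul_sub_of_deriv_le hc hdiff hhi
  -- key pointwise bounds
  have hlow : ∀ s ∈ Icc t₂ t₃, f t₂ + m * (s - t₂) ≤ f s := by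
    intro s hs
    have hs' : s ∈ Icc t₁ t₃ := ⟨h12.le.trans hs.1, hs.2⟩
    linarith [hLB t₂ ht2 s hs' hs.1]
  have hup : ∀ s ∈ Icc t₁ t₂, f s ≤ f t₁ + M * (s - t₁) := by
    intro s hs
    have hs' : s ∈ Icc t₁ t₃ := ⟨hs.1, hs.2.trans h23.le⟩
    linarith [hUB t₁ ht1 s hs' hs.1]
  have hfnn : ∀ s ∈ Icc t₁ t₂, 0 ≤ f s := by
    intro s hs
    have hs' : s ∈ Icc t₁ t₃ := ⟨hs.1, hs.2.trans h23.le⟩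
    linarith [hLB t₁ ht1 s hs' hs.1, mul_nonneg hm.le (sub_nonneg.mpr hs.1)]
  -- denominators
  have hd1 : 0 < f t₂ - f t₁ := sub_pos.mpr (hmono ht1 ht2 h12)
  have hd2 : 0 < f t₃ - f t₂ := sub_pos.mpr (hmono ht2 ht3 h23)
  have hd1' : m * (t₂ - t₁) ≤ f t₂ - f t₁ := hLB t₁ ht1 t₂ ht2 h12.le
  have hd2' : f t₃ - f t₂ ≤ M * (t₃ - t₂) := hUB t₂ ht2 t₃ ht3 h23.le
  have hf2nn : 0 ≤ f t₂ := hfnn t₂ ⟨h12.le, le_refl _⟩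
  -- integrability
  have hint1 : IntervalIntegrable f volume t₁ t₂ :=
    (hc.mono (Icc_subset_Icc (le_refl _) h23.le)).intervalIntegrable_of_Icc h12.le
  have hint2 : IntervalIntegrable f volume t₂ t₃ :=
    (hc.mono (Icc_subset_Icc h12.le (le_refl _))).intervalIntegrable_of_Icc h23.le
  have hcontlin : ∀ c k a : ℝ, Continuous (fun s : ℝ => c + k * (s - a)) := fun c k a =>
    continuous_const.add (continuous_const.mul (continuous_id.sub continuous_const))
  -- computing the linear integrals
  have hlin : ∀ c k a b : ℝ, (∫ s in a..b, (c + k * (s - a)))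
      = c * (b - a) + k * (b - a) ^ 2 / 2 := by
    intro c k a b
    have h1 : (∫ s in a..b, (c + k * (s - a)))
        = (∫ _ in a..b, c) + ∫ s in a..b, k * (s - a) := by
      exact intervalIntegral.integral_add intervalIntegrable_const
        ((continuous_const.mul (continuous_id.sub continuous_const)).intervalIntegrable a b)
    have h2 : (∫ s in a..b, k * (s - a)) = k * ∫ s in a..b, (s - a) :=
      intervalIntegral.integral_const_mul _ _
    have h3 : (∫ s in a..b, (s - a)) = ∫ s in a - a..b - a, s := by
      exact (intervalIntegral.integral_comp_sub_right (fun x => x) a)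
    rw [h1, h2, h3, integral_id, intervalIntegral.integral_const]
    simp only [smul_eq_mul]
    ring
  -- integral bounds
  have hI2 : f t₂ * (t₃ - t₂) + m * (t₃ - t₂) ^ 2 / 2 ≤ ∫ s in t₂..t₃, f s := by
    have h1 : (∫ s in t₂..t₃, (f t₂ + m * (s - t₂))) ≤ ∫ s in t₂..t₃, f s :=
      intervalIntegral.integral_mono_on h23.le
        ((hcontlin (f t₂) m t₂).intervalIntegrable _ _) hint2 hlow
    rw [hlin] at h1
    linarith
  have hI1 : (∫ s in t₁..t₂, f s) ≤ f t₁ * (t₂ - t₁) + M * (t₂ - t₁) ^ 2 / 2 := by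
    have h1 : (∫ s in t₁..t₂, f s) ≤ ∫ s in t₁..t₂, (f t₁ + M * (s - t₁)) :=
      intervalIntegral.integral_mono_on h12.le hint1
        ((hcontlin (f t₁) M t₁).intervalIntegrable _ _) hup
    rw [hlin] at h1
    linarith
  have hI1nn : 0 ≤ ∫ s in t₁..t₂, f s :=
    intervalIntegral.integral_nonneg h12.le fun s hs => hfnn s hs
  have hI2nn : 0 ≤ ∫ s in t₂..t₃, f s := by
    have h32 : (0:ℝ) ≤ t₃ - t₂ := by linarith
    have : (0:ℝ) ≤ f t₂ * (t₃ - t₂) + m * (t₃ - t₂) ^ 2 / 2 := by positivity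
    linarith
  -- division bounds
  have hb2 : f t₂ / M + (m / (2 * M)) * (t₃ - t₂) ≤ (∫ s in t₂..t₃, f s) / (f t₃ - f t₂) := by
    have key : (f t₂ * (t₃ - t₂) + m * (t₃ - t₂) ^ 2 / 2) / (M * (t₃ - t₂))
        ≤ (∫ s in t₂..t₃, f s) / (f t₃ - f t₂) :=
      div_le_div₀ hI2nn hI2 hd2 hd2'
    have heq : (f t₂ * (t₃ - t₂) + m * (t₃ - t₂) ^ 2 / 2) / (M * (t₃ - t₂))
        = f t₂ / M + (m / (2 * M)) * (t₃ - t₂) := by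
      have h32 : t₃ - t₂ ≠ 0 := by linarith
      field_simp
    linarith
  have hb1 : (∫ s in t₁..t₂, f s) / (f t₂ - f t₁)
      ≤ f t₁ / m + (M / (2 * m)) * (t₂ - t₁) := by
    have h21 : (0:ℝ) ≤ t₂ - t₁ := by linarith
    have hnum : (0:ℝ) ≤ f t₁ * (t₂ - t₁) + M * (t₂ - t₁) ^ 2 / 2 := by positivity
    have key : (∫ s in t₁..t₂, f s) / (f t₂ - f t₁)
        ≤ (f t₁ * (t₂ - t₁) + M * (t₂ - t₁) ^ 2 / 2) / (m * (t₂ - t₁)) :=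
      div_le_div₀ hnum hI1 (by nlinarith) hd1'
    have heq : (f t₁ * (t₂ - t₁) + M * (t₂ - t₁) ^ 2 / 2) / (m * (t₂ - t₁))
        = f t₁ / m + (M / (2 * m)) * (t₂ - t₁) := by
      have h21 : t₂ - t₁ ≠ 0 := by linarith
      field_simp
    linarith
  linarith
end

section
/- Under the setting of the unbiased integrate-and-fire TEM (b = 0) with threshold δ: if the input on the interval [t_n, t_{n+1}] is a·φ(· - τ) with a ≥ ε_a > 0, φ continuous, zero on (-∞,-L], positive and increasing on (-L,0), and t_n ≥ τ - L, t_{n+1} ≤ τ, then δ = a·∫_{t_n}^{t_{n+1}} φ(s - τ) ds ≥ ε_a·F(-L + (t_{n+1} - t_n)), where F(t) = ∫_{-L}^{t} φ(s) ds; consequently t_{n+1} - t_n ≤ L + F⁻¹(δ/ε_a). -/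
open Set MeasureTheory intervalIntegral

/-- Inter-spike interval bound for the unbiased IF TEM driven by a single pulse. -/
theorem unbiased_if_interval_bound
    (L δ εa a τ tn tn1 : ℝ) (hL : 0 < L) (hδ : 0 < δ)
    (hεa : 0 < εa) (ha : εa ≤ a)
    (htn : tn < tn1) (htnτ : τ - L ≤ tn) (htn1τ : tn1 ≤ τ)
    (φ : ℝ → ℝ) (hcont : Continuous φ)
    (hzero : ∀ t ≤ -L, φ t = 0)
    (hmono : MonotoneOn φ (Icc (-L) 0))
    (hpos : ∀ t ∈ Ioo (-L) 0, 0 < φ t)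
    (hfire : δ = a * ∫ s in tn..tn1, φ (s - τ))
    (G : ℝ → ℝ)
    (hGmono : StrictMonoOn G (Icc 0 (∫ s in (-L)..(0:ℝ), φ s)))
    (hGinv : ∀ t ∈ Icc (-L) 0, G (∫ s in (-L)..t, φ s) = t)
    (hdom : δ / εa ≤ ∫ s in (-L)..(0:ℝ), φ s) :
    δ ≥ εa * ∫ s in (-L)..(-L + (tn1 - tn)), φ s ∧
    tn1 - tn ≤ L + G (δ / εa) := by
  have hh : tn1 - tn ≤ L := by linarith
  have hφ0 : φ (-L) = 0 := hzero _ le_rfl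
  have hnn : ∀ t ∈ Icc (-L) 0, 0 ≤ φ t := by
    intro t ht
    have := hmono (left_mem_Icc.2 (by linarith)) ht ht.1
    rw [hφ0] at this; exact this
  set c := tn - τ with hc
  have hcL : -L ≤ c := by rw [hc]; linarith
  have hch : c + (tn1 - tn) ≤ 0 := by rw [hc]; linarith
  have hshift : ∫ s in (-L)..(-L + (tn1 - tn)), φ s ≤ ∫ s in tn..tn1, φ (s - τ) := by
    rw [intervalIntegral.integral_comp_sub_right φ τ]
    have e1 : -L + (c + L) = tn - τ := by rw [hc]; ring
    have e2 : -L + (tn1 - tn) + (c + L) = tn1 - τ := by rw [hc]; ring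
    have h1 : (∫ s in (-L)..(-L + (tn1 - tn)), φ (s + (c + L)))
        = ∫ s in (tn - τ)..(tn1 - τ), φ s := by
      rw [intervalIntegral.integral_comp_add_right φ (c + L), e1, e2]
    rw [← h1]
    apply intervalIntegral.integral_mono_on (by linarith) (hcont.intervalIntegrable _ _)
      ((hcont.comp (continuous_add_right (c + L))).intervalIntegrable _ _)
    intro x hx
    obtain ⟨hx1, hx2⟩ := hx
    show φ x ≤ φ (x + (c + L))
    exact hmono ⟨hx1, by linarith⟩ ⟨by linarith, by linarith⟩ (by linarith)
  have hInn : 0 ≤ ∫ s in (-L)..(-L + (tn1 - tn)), φ s := by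
    apply intervalIntegral.integral_nonneg (by linarith)
    intro x hx; exact hnn x ⟨hx.1, by linarith [hx.2]⟩
  have hpart1 : εa * ∫ s in (-L)..(-L + (tn1 - tn)), φ s ≤ δ := by
    rw [hfire]
    exact mul_le_mul ha hshift hInn (by linarith)
  refine ⟨hpart1, ?_⟩
  have hF : (∫ s in (-L)..(-L + (tn1 - tn)), φ s) ≤ δ / εa := by
    rw [le_div_iff₀ hεa, mul_comm]; exact hpart1
  have hmem1 : (∫ s in (-L)..(-L + (tn1 - tn)), φ s) ∈ Icc 0 (∫ s in (-L)..(0:ℝ), φ s) :=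
    ⟨hInn, le_trans hF hdom⟩
  have hmem2 : δ / εa ∈ Icc 0 (∫ s in (-L)..(0:ℝ), φ s) :=
    ⟨by positivity, hdom⟩
  have hG := hGmono.monotoneOn hmem1 hmem2 hF
  rw [hGinv (-L + (tn1 - tn)) ⟨by linarith, by linarith⟩] at hG
  linarith
end

section
/- Let φ be continuous on ℝ, zero on (-∞,-L], C² on (-L,0) with φ' > 0 on (-L,0), φ'_+(-L) ≠ 0, and suppose φ' extends continuously to [-L, 0) from the right. With T_m(δ), T_M(δ), φ'_{m,δ}, φ'_{M,δ}, φ''_{M,δ} as in the paper, define ε̄_m(δ) = 2 + T_m/T_M - (2φ(-L+2T_M)/(φ'_{m,δ})²)·φ''_{M,δ}·(2T_M/T_m) - (φ'_{M,δ})²/(φ'_{m,δ})². Then lim_{δ→0⁺} ε̄_m(δ) = 1 + (b-g_∞)/(b+g_∞) > 0; in particular there exists δ₀ > 0 with ε̄_m(δ₀) > 0. -/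
/-!
As `δ → 0⁺` the sampling interval `S = [-L + T_m/2, -L + 4 T_M]` shrinks to `-L` from the
right. Hence the infimum and supremum of `φ'` over `S` both tend to `φ'_+(-L) = c ≠ 0`, so the
last term tends to `1`; the middle term tends to `0` because `φ(-L + 2 T_M) → φ(-L) = 0` while
`sup_S |φ''|` stays bounded; and `T_m / T_M = (b - g_∞)/(b + g_∞)` does not depend on `δ`.
-/

open Set Filter Topology

/-- The recovery-condition quantity `ε̄_m(δ)` of the paper. -/
noncomputable def epsBarM (L b gInf : ℝ) (φ φ' φ'' : ℝ → ℝ) (δ : ℝ) : ℝ :=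
  let Tm := 2 * δ / (b + gInf)
  let TM := 2 * δ / (b - gInf)
  let S := Icc (-L + Tm / 2) (-L + 4 * TM)
  2 + Tm / TM
    - (2 * φ (-L + 2 * TM) / (sInf (φ' '' S)) ^ 2) *
        (sSup ((fun t => |φ'' t|) '' S)) * (2 * TM / Tm)
    - (sSup (φ' '' S)) ^ 2 / (sInf (φ' '' S)) ^ 2

section SmallSets

variable {ι : Type*} {l : Filter ι} {T : ι → Set ℝ} {c : ℝ}

theorem tendsto_csInf_of_tendsto_smallSets (hT : Tendsto T l (𝓝 c).smallSets)
    (hne : ∀ᶠ i in l, (T i).Nonempty) : Tendsto (fun i => sInf (T i)) l (𝓝 c) := by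
  refine Metric.nhds_basis_closedBall.tendsto_right_iff.2 fun ε hε => ?_
  filter_upwards [hT.eventually (eventually_smallSets_subset.2 (Metric.closedBall_mem_nhds c hε)),
    hne] with i hsub hne
  have hbdd : BddBelow (T i) := (Metric.isBounded_closedBall.subset hsub).bddBelow
  exact closure_minimal hsub Metric.isClosed_closedBall (csInf_mem_closure hne hbdd)

theorem tendsto_csSup_of_tendsto_smallSets (hT : Tendsto T l (𝓝 c).smallSets)
    (hne : ∀ᶠ i in l, (T i).Nonempty) : Tendsto (fun i => sSup (T i)) l (𝓝 c) := by
  refine Metric.nhds_basis_closedBall.tendsto_right_iff.2 fun ε hε => ?_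
  filter_upwards [hT.eventually (eventually_smallSets_subset.2 (Metric.closedBall_mem_nhds c hε)),
    hne] with i hsub hne
  have hbdd : BddAbove (T i) := (Metric.isBounded_closedBall.subset hsub).bddAbove
  exact closure_minimal hsub Metric.isClosed_closedBall (csSup_mem_closure hne hbdd)

theorem isBoundedUnder_norm_csSup_image_abs {α : Type*} {l' : Filter α} {S : ι → Set α}
    {g : α → ℝ} {C : ℝ} (hS : Tendsto S l l'.smallSets) (hne : ∀ᶠ i in l, (S i).Nonempty)
    (hg : ∀ᶠ x in l', |g x| ≤ C) :
    IsBoundedUnder (· ≤ ·) l (fun i => ‖sSup ((fun x => |g x|) '' S i)‖) := by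
  refine isBoundedUnder_of_eventually_le (a := C) ?_
  filter_upwards [hS.eventually (eventually_smallSets_forall.2 hg), hne] with i hC ⟨x, hx⟩
  have hbdd : BddAbove ((fun x => |g x|) '' S i) := ⟨C, forall_mem_image.2 hC⟩
  rw [Real.norm_of_nonneg ((abs_nonneg (g x)).trans (le_csSup hbdd (mem_image_of_mem _ hx)))]
  exact csSup_le ⟨_, mem_image_of_mem _ hx⟩ (forall_mem_image.2 hC)

end SmallSets

theorem tendsto_const_add_mul_nhdsGT (a : ℝ) {k : ℝ} (hk : 0 < k) :
    Tendsto (fun δ => a + k * δ) (𝓝[>] 0) (𝓝[>] a) := by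
  refine tendsto_nhdsWithin_of_tendsto_nhds_of_eventually_within _ ?_ ?_
  · exact tendsto_nhdsWithin_of_tendsto_nhds (Continuous.tendsto' (by fun_prop) _ _ (by simp))
  · filter_upwards [self_mem_nhdsWithin] with δ (hδ : 0 < δ)
    exact lt_add_of_pos_right a (mul_pos hk hδ)

noncomputable def samplingInterval (L b gInf δ : ℝ) : Set ℝ :=
  Icc (-L + 2 * δ / (b + gInf) / 2) (-L + 4 * (2 * δ / (b - gInf)))

section SamplingInterval

variable {L b gInf : ℝ}

theorem tendsto_samplingInterval (h₁ : 0 < b + gInf) (h₂ : 0 < b - gInf) :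
    Tendsto (samplingInterval L b gInf) (𝓝[>] 0) (𝓝[>] (-L)).smallSets := by
  refine Tendsto.Icc (l₁ := 𝓝[>] (-L)) (u₁ := fun δ => -L + 2 * δ / (b + gInf) / 2)
    (u₂ := fun δ => -L + 4 * (2 * δ / (b - gInf))) ?_ ?_
  · convert tendsto_const_add_mul_nhdsGT (-L) (inv_pos.2 h₁) using 2; ring
  · convert tendsto_const_add_mul_nhdsGT (-L) (div_pos (by norm_num : (0 : ℝ) < 8) h₂) using 2
    ring

theorem samplingInterval_nonempty (hgInf : 0 < gInf) (hgb : gInf < b) {δ : ℝ} (hδ : 0 < δ) :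
    (samplingInterval L b gInf δ).Nonempty := by
  refine nonempty_Icc.2 ?_
  have : 2 * δ / (b + gInf) ≤ 2 * δ / (b - gInf) := by gcongr; linarith
  have : 0 < 2 * δ / (b - gInf) := div_pos (by positivity) (by linarith)
  linarith

theorem epsBarM_eq (φ φ' φ'' : ℝ → ℝ) {δ : ℝ} (hδ : δ ≠ 0) (h₁ : b + gInf ≠ 0)
    (h₂ : b - gInf ≠ 0) :
    epsBarM L b gInf φ φ' φ'' δ = 2 + (b - gInf) / (b + gInf)
      - 2 * φ (-L + 2 * (2 * δ / (b - gInf))) / sInf (φ' '' samplingInterval L b gInf δ) ^ 2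
        * sSup ((fun t => |φ'' t|) '' samplingInterval L b gInf δ)
        * (2 * (b + gInf) / (b - gInf))
      - sSup (φ' '' samplingInterval L b gInf δ) ^ 2
        / sInf (φ' '' samplingInterval L b gInf δ) ^ 2 := by
  have hTm : 2 * δ / (b + gInf) / (2 * δ / (b - gInf)) = (b - gInf) / (b + gInf) := by
    field_simp
  have hTM : 2 * (2 * δ / (b - gInf)) / (2 * δ / (b + gInf)) = 2 * (b + gInf) / (b - gInf) := by
    field_simp
  simp only [epsBarM, samplingInterval, hTm, hTM]

end SamplingInterval

theorem tendsto_epsBarM {L b gInf c C : ℝ} (hgInf : 0 < gInf) (hgb : gInf < b) (hc : c ≠ 0)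
    {φ φ' φ'' : ℝ → ℝ} (hφ : ContinuousAt φ (-L)) (hφL : φ (-L) = 0)
    (hφ' : Tendsto φ' (𝓝[>] (-L)) (𝓝 c)) (hφ'' : ∀ᶠ t in 𝓝[>] (-L), |φ'' t| ≤ C) :
    Tendsto (epsBarM L b gInf φ φ' φ'') (𝓝[>] 0) (𝓝 (1 + (b - gInf) / (b + gInf))) := by
  have h₁ : 0 < b + gInf := by linarith
  have h₂ : 0 < b - gInf := by linarith
  have hS := tendsto_samplingInterval (L := L) h₁ h₂
  have hne : ∀ᶠ δ in 𝓝[>] 0, (samplingInterval L b gInf δ).Nonempty :=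
    eventually_nhdsWithin_of_forall fun _ hδ => samplingInterval_nonempty hgInf hgb hδ
  have hinf := tendsto_csInf_of_tendsto_smallSets (hφ'.image_smallSets.comp hS)
    (hne.mono fun _ h => h.image φ')
  have hsup := tendsto_csSup_of_tendsto_smallSets (hφ'.image_smallSets.comp hS)
    (hne.mono fun _ h => h.image φ')
  have hφ0 : Tendsto (fun δ => φ (-L + 2 * (2 * δ / (b - gInf)))) (𝓝[>] 0) (𝓝 0) := by
    have : Tendsto (fun δ => -L + 2 * (2 * δ / (b - gInf))) (𝓝[>] 0) (𝓝 (-L)) :=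
      tendsto_nhdsWithin_of_tendsto_nhds (Continuous.tendsto' (by fun_prop) _ _ (by simp))
    have h := hφ.tendsto.comp this
    rwa [hφL] at h
  have hc2 : c ^ 2 ≠ 0 := pow_ne_zero 2 hc
  have hfrac := (hφ0.const_mul 2).div (hinf.pow 2) hc2
  rw [mul_zero, zero_div] at hfrac
  have hmid := (hfrac.zero_mul_isBoundedUnder_le
    (isBoundedUnder_norm_csSup_image_abs hS hne hφ'')).mul_const (2 * (b + gInf) / (b - gInf))
  have hratio := (hsup.pow 2).div (hinf.pow 2) hc2
  have hlim := ((tendsto_const_nhds (x := 2 + (b - gInf) / (b + gInf))).sub hmid).sub hratio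
  rw [zero_mul, sub_zero, div_self hc2, add_sub_right_comm,
    show (2 : ℝ) - 1 = 1 by norm_num] at hlim
  refine hlim.congr' (eventually_nhdsWithin_of_forall fun δ (hδ : 0 < δ) => ?_)
  exact (epsBarM_eq φ φ' φ'' hδ.ne' h₁.ne' h₂.ne').symm

theorem recovery_condition_achievable_general
    (L b gInf c : ℝ) (hL : 0 < L) (hgInf : 0 < gInf) (hgb : gInf < b) (hc : c ≠ 0)
    (φ φ' φ'' : ℝ → ℝ)
    (hcont : Continuous φ)
    (hzero : ∀ t ≤ -L, φ t = 0)
    (hright : Tendsto φ' (nhdsWithin (-L) (Ioi (-L))) (nhds c))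
    (hbdd2 : ∃ C : ℝ, ∀ t ∈ Ioc (-L) (-L + L / 2), |φ'' t| ≤ C) :
    Tendsto (epsBarM L b gInf φ φ' φ'') (nhdsWithin 0 (Ioi 0))
        (nhds (1 + (b - gInf) / (b + gInf))) ∧
    0 < 1 + (b - gInf) / (b + gInf) ∧
    ∃ δ₀ > 0, 0 < epsBarM L b gInf φ φ' φ'' δ₀ := by
  obtain ⟨C, hC⟩ := hbdd2
  have hφ'' : ∀ᶠ t in 𝓝[>] (-L), |φ'' t| ≤ C :=
    eventually_of_mem (Ioc_mem_nhdsGT (by linarith)) hC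
  have hlim := tendsto_epsBarM hgInf hgb hc hcont.continuousAt (hzero (-L) le_rfl) hright hφ''
  have hpos : 0 < 1 + (b - gInf) / (b + gInf) := by
    have : 0 < (b - gInf) / (b + gInf) := div_pos (by linarith) (by linarith)
    linarith
  obtain ⟨δ₀, hε, hδ₀⟩ :=
    ((hlim.eventually (lt_mem_nhds hpos)).and eventually_mem_nhdsWithin).exists
  exact ⟨hlim, hpos, δ₀, hδ₀, hε⟩

/-- Corollary 1: as `δ → 0⁺` the recovery quantity `ε̄_m(δ)` tends to the positive limit
`1 + (b - g_∞)/(b + g_∞)`; in particular some `δ₀ > 0` makes it positive. -/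
theorem recovery_condition_achievable
    (L b gInf c : ℝ) (hL : 0 < L) (hgInf : 0 < gInf) (hgb : gInf < b) (hc : c ≠ 0)
    (φ φ' φ'' : ℝ → ℝ)
    (hcont : Continuous φ)
    (hzero : ∀ t ≤ -L, φ t = 0)
    (hderiv : ∀ t ∈ Ioo (-L) 0, HasDerivAt φ (φ' t) t)
    (hderiv2 : ∀ t ∈ Ioo (-L) 0, HasDerivAt φ' (φ'' t) t)
    (hpos : ∀ t ∈ Ioo (-L) 0, 0 < φ' t)
    (hright : Tendsto φ' (nhdsWithin (-L) (Ioi (-L))) (nhds c))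
    (hbdd2 : ∃ C : ℝ, ∀ t ∈ Ioc (-L) (-L + L / 2), |φ'' t| ≤ C) :
    Tendsto (epsBarM L b gInf φ φ' φ'') (nhdsWithin 0 (Ioi 0))
        (nhds (1 + (b - gInf) / (b + gInf))) ∧
    0 < 1 + (b - gInf) / (b + gInf) ∧
    ∃ δ₀ > 0, 0 < epsBarM L b gInf φ φ' φ'' δ₀ :=
  recovery_condition_achievable_general L b gInf c hL hgInf hgb hc φ φ' φ'' hcont hzero hright hbdd2
end

section
/- Let f be differentiable and strictly increasing on [t₁, t₃] with f ≥ 0 there, t₁ < t₂ < t₃, and 0 < m ≤ f' ≤ M on [t₁, t₃]. Set I₁ = ∫_{t₁}^{t₂} f and I₂ = ∫_{t₂}^{t₃} f, Δf₁ = f(t₂)-f(t₁), Δf₂ = f(t₃)-f(t₂). Then Δf₁·I₂ - Δf₂·I₁ ≥ (m³/(2M))·min(t₂-t₁, t₃-t₂)³ · ε̄ whenever ε̄ ≤ (t₃-t₂)/(t₂-t₁) + 2 - 2f(t₁)·(M-m)/(m²(t₂-t₁)) - M²/m², with ε̄ ≥ 0. -/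
/-!
Since `m ≤ f' ≤ M`, each increment `Δf` lies between `m` and `M` times the length of its
interval, and comparing `f` with the lines of slope `m` through an endpoint gives Taylor-type
bounds on the integrals. Together they pinch the ratios: `I₂ / Δf₂ ≥ (f t₂ + m b / 2) / M` and
`I₁ / Δf₁ ≤ f t₁ / m + a - m a / (2M)`, with `a = t₂ - t₁`, `b = t₃ - t₂`. The hypothesis on `εbar`
says exactly that the gap between these two bounds is at least `m a εbar / (2M)` (up to the
nonnegative term `a (M - m)² / (2mM)`), and `Δf₁ Δf₂ ≥ m² a b` converts the gap between the
ratios into the lower bound for `Δf₁ I₂ - Δf₂ I₁ = Δf₁ Δf₂ (I₂ / Δf₂ - I₁ / Δf₁)`.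
-/

open Set MeasureTheory intervalIntegral

theorem mul_div_le_sub_of_le_bracket {a b c m M ε : ℝ} (ha : 0 < a) (hm : 0 < m) (hM : 0 < M)
    (hε : ε ≤ b / a + 2 - 2 * c * (M - m) / (m ^ 2 * a) - M ^ 2 / m ^ 2) :
    m * a * ε / (2 * M) ≤ (c + m * a + m * b / 2) / M - (c / m + a - m * a / (2 * M)) := by
  have hexpand : (c + m * a + m * b / 2) / M - (c / m + a - m * a / (2 * M)) =
      m * a * (b / a + 2 - 2 * c * (M - m) / (m ^ 2 * a) - M ^ 2 / m ^ 2) / (2 * M)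
        + a * (M - m) ^ 2 / (2 * m * M) := by
    field_simp
    ring
  rw [hexpand]
  have : m * a * ε / (2 * M) ≤
      m * a * (b / a + 2 - 2 * c * (M - m) / (m ^ 2 * a) - M ^ 2 / m ^ 2) / (2 * M) := by
    gcongr
  have : 0 ≤ a * (M - m) ^ 2 / (2 * m * M) := by positivity
  linarith

section DerivBounds

variable {f f' : ℝ → ℝ} {m M x y : ℝ}

theorem Convex.mul_sub_le_image_sub_of_le_hasDerivAt {D : Set ℝ} (hD : Convex ℝ D)
    (hf : ∀ t ∈ D, HasDerivAt f (f' t) t) (hm : ∀ t ∈ D, m ≤ f' t) :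
    ∀ x ∈ D, ∀ y ∈ D, x ≤ y → m * (y - x) ≤ f y - f x :=
  hD.mul_sub_le_image_sub_of_le_deriv (HasDerivAt.continuousOn hf)
    (fun t ht => (hf t (interior_subset ht)).differentiableAt.differentiableWithinAt)
    (fun t ht => (hf t (interior_subset ht)).deriv ▸ hm t (interior_subset ht))

theorem Convex.image_sub_le_mul_sub_of_hasDerivAt_le {D : Set ℝ} (hD : Convex ℝ D)
    (hf : ∀ t ∈ D, HasDerivAt f (f' t) t) (hM : ∀ t ∈ D, f' t ≤ M) :
    ∀ x ∈ D, ∀ y ∈ D, x ≤ y → f y - f x ≤ M * (y - x) :=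
  hD.image_sub_le_mul_sub_of_deriv_le (HasDerivAt.continuousOn hf)
    (fun t ht => (hf t (interior_subset ht)).differentiableAt.differentiableWithinAt)
    (fun t ht => (hf t (interior_subset ht)).deriv ▸ hM t (interior_subset ht))

theorem integral_const_add_mul_sub (c k x y : ℝ) :
    ∫ t in x..y, (c + k * (t - x)) = c * (y - x) + k * (y - x) ^ 2 / 2 := by
  rw [integral_add intervalIntegrable_const (Continuous.intervalIntegrable (by fun_prop) _ _),
    intervalIntegral.integral_const_mul, integral_comp_sub_right (fun t => t)]
  simp
  ring

theorem mul_add_le_integral_of_le_deriv (hxy : x ≤ y) (hf : ∀ t ∈ Icc x y, HasDerivAt f (f' t) t)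
    (hm : ∀ t ∈ Icc x y, m ≤ f' t) :
    f x * (y - x) + m * (y - x) ^ 2 / 2 ≤ ∫ t in x..y, f t := by
  have hinc := (convex_Icc x y).mul_sub_le_image_sub_of_le_hasDerivAt hf hm
  rw [← integral_const_add_mul_sub]
  refine integral_mono_on hxy (Continuous.intervalIntegrable (by fun_prop) _ _)
    ((HasDerivAt.continuousOn hf).intervalIntegrable_of_Icc hxy) fun t ht => ?_
  linarith [hinc x (left_mem_Icc.2 hxy) t ht ht.1]

theorem integral_le_mul_sub_of_le_deriv (hxy : x ≤ y) (hf : ∀ t ∈ Icc x y, HasDerivAt f (f' t) t)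
    (hm : ∀ t ∈ Icc x y, m ≤ f' t) :
    ∫ t in x..y, f t ≤ f y * (y - x) - m * (y - x) ^ 2 / 2 := by
  have hinc := (convex_Icc x y).mul_sub_le_image_sub_of_le_hasDerivAt hf hm
  calc ∫ t in x..y, f t ≤ ∫ t in x..y, ((f y - m * (y - x)) + m * (t - x)) := by
        refine integral_mono_on hxy ((HasDerivAt.continuousOn hf).intervalIntegrable_of_Icc hxy)
          (Continuous.intervalIntegrable (by fun_prop) _ _) fun t ht => ?_
        linarith [hinc t ht y (right_mem_Icc.2 hxy) ht.2]
    _ = f y * (y - x) - m * (y - x) ^ 2 / 2 := by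
        rw [integral_const_add_mul_sub]
        ring

theorem image_sub_mem_Icc_of_hasDerivAt (hxy : x ≤ y)
    (hf : ∀ t ∈ Icc x y, HasDerivAt f (f' t) t) (hf' : ∀ t ∈ Icc x y, m ≤ f' t ∧ f' t ≤ M) :
    f y - f x ∈ Icc (m * (y - x)) (M * (y - x)) :=
  have hx : x ∈ Icc x y := left_mem_Icc.2 hxy
  have hy : y ∈ Icc x y := right_mem_Icc.2 hxy
  ⟨(convex_Icc x y).mul_sub_le_image_sub_of_le_hasDerivAt hf (fun t ht => (hf' t ht).1) x hx y hy hxy,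
    (convex_Icc x y).image_sub_le_mul_sub_of_hasDerivAt_le hf (fun t ht => (hf' t ht).2) x hx y hy hxy⟩

theorem add_div_le_integral_div_sub (hxy : x < y) (hf : ∀ t ∈ Icc x y, HasDerivAt f (f' t) t)
    (hf' : ∀ t ∈ Icc x y, m ≤ f' t ∧ f' t ≤ M) (hm : 0 < m) (hfx : 0 ≤ f x) :
    (f x + m * (y - x) / 2) / M ≤ (∫ t in x..y, f t) / (f y - f x) := by
  obtain ⟨hΔlow, hΔup⟩ := image_sub_mem_Icc_of_hasDerivAt hxy.le hf hf'
  have hlen : 0 < y - x := sub_pos.2 hxy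
  have hM : 0 < M := pos_of_mul_pos_left ((mul_pos hm hlen).trans_le (hΔlow.trans hΔup)) hlen.le
  have hI := mul_add_le_integral_of_le_deriv hxy.le hf fun t ht => (hf' t ht).1
  rw [div_le_div_iff₀ hM ((mul_pos hm hlen).trans_le hΔlow)]
  nlinarith [mul_le_mul_of_nonneg_left hΔup (by positivity : 0 ≤ f x + m * (y - x) / 2)]

theorem integral_div_sub_le (hxy : x < y) (hf : ∀ t ∈ Icc x y, HasDerivAt f (f' t) t)
    (hf' : ∀ t ∈ Icc x y, m ≤ f' t ∧ f' t ≤ M) (hm : 0 < m) (hfx : 0 ≤ f x) :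
    (∫ t in x..y, f t) / (f y - f x) ≤ f x / m + (y - x) - m * (y - x) / (2 * M) := by
  obtain ⟨hΔlow, hΔup⟩ := image_sub_mem_Icc_of_hasDerivAt hxy.le hf hf'
  have hlen : 0 < y - x := sub_pos.2 hxy
  have hM : 0 < M := pos_of_mul_pos_left ((mul_pos hm hlen).trans_le (hΔlow.trans hΔup)) hlen.le
  have hI := integral_le_mul_sub_of_le_deriv hxy.le hf fun t ht => (hf' t ht).1
  have hslack : (f x / m + (y - x) - m * (y - x) / (2 * M)) * (f y - f x) =
      f y * (y - x) - m * (y - x) ^ 2 / 2 + (f x * ((f y - f x) - m * (y - x)) / m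
        + m * (y - x) * (M * (y - x) - (f y - f x)) / (2 * M)) := by
    field_simp
    ring
  rw [div_le_iff₀ ((mul_pos hm hlen).trans_le hΔlow), hslack]
  have := sub_nonneg.2 hΔlow
  have := sub_nonneg.2 hΔup
  have : 0 ≤ f x * ((f y - f x) - m * (y - x)) / m
      + m * (y - x) * (M * (y - x) - (f y - f x)) / (2 * M) := by positivity
  linarith

theorem mul_div_le_integral_ratio_gap {t₁ t₂ t₃ ε : ℝ} (h12 : t₁ < t₂) (h23 : t₂ < t₃)
    (hm : 0 < m) (hf : ∀ t ∈ Icc t₁ t₃, HasDerivAt f (f' t) t)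
    (hf' : ∀ t ∈ Icc t₁ t₃, m ≤ f' t ∧ f' t ≤ M) (hf₁ : 0 ≤ f t₁)
    (hε : ε ≤ (t₃ - t₂) / (t₂ - t₁) + 2
        - 2 * f t₁ * (M - m) / (m ^ 2 * (t₂ - t₁)) - M ^ 2 / m ^ 2) :
    m * (t₂ - t₁) * ε / (2 * M) ≤
      (∫ t in t₂..t₃, f t) / (f t₃ - f t₂) - (∫ t in t₁..t₂, f t) / (f t₂ - f t₁) := by
  have hsub₁ : Icc t₁ t₂ ⊆ Icc t₁ t₃ := Icc_subset_Icc_right h23.le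
  have hsub₂ : Icc t₂ t₃ ⊆ Icc t₁ t₃ := Icc_subset_Icc_left h12.le
  have hbound₁ := fun t (ht : t ∈ Icc t₁ t₂) => hf' t (hsub₁ ht)
  have hΔ₁ := (image_sub_mem_Icc_of_hasDerivAt h12.le (fun t ht => hf t (hsub₁ ht)) hbound₁).1
  obtain ⟨hm₁, hM₁⟩ := hf' t₁ ⟨le_rfl, (h12.trans h23).le⟩
  have hM : 0 < M := hm.trans_le (hm₁.trans hM₁)
  have hratio₁ := integral_div_sub_le h12 (fun t ht => hf t (hsub₁ ht)) hbound₁ hm hf₁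
  have hratio₂ := add_div_le_integral_div_sub h23 (fun t ht => hf t (hsub₂ ht))
    (fun t ht => hf' t (hsub₂ ht)) hm (by linarith [mul_pos hm (sub_pos.2 h12)])
  have hbracket := mul_div_le_sub_of_le_bracket (sub_pos.2 h12) hm hM hε
  have : (f t₁ + m * (t₂ - t₁) + m * (t₃ - t₂) / 2) / M ≤ (f t₂ + m * (t₃ - t₂) / 2) / M := by
    gcongr
    linarith
  linarith

end DerivBounds

theorem min_pow_three_le_sq_mul {a b : ℝ} (ha : 0 ≤ a) (hb : 0 ≤ b) : min a b ^ 3 ≤ a ^ 2 * b :=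
  calc min a b ^ 3 = min a b ^ 2 * min a b := by ring
    _ ≤ a ^ 2 * b := by
      have := le_min ha hb
      gcongr
      exacts [min_le_left a b, min_le_right a b]

theorem wronskian_lower_bound_general
    (t₁ t₂ t₃ m M εbar : ℝ) (h12 : t₁ < t₂) (h23 : t₂ < t₃)
    (hm : 0 < m) (hmM : m ≤ M)
    (f f' : ℝ → ℝ)
    (hf0 : ∀ t ∈ Icc t₁ t₃, 0 ≤ f t)
    (hderiv : ∀ t ∈ Icc t₁ t₃, HasDerivAt f (f' t) t)
    (hbound : ∀ t ∈ Icc t₁ t₃, m ≤ f' t ∧ f' t ≤ M)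
    (hεnn : 0 ≤ εbar)
    (hεle : εbar ≤ (t₃ - t₂) / (t₂ - t₁) + 2
        - 2 * f t₁ * (M - m) / (m ^ 2 * (t₂ - t₁)) - M ^ 2 / m ^ 2) :
    (f t₂ - f t₁) * (∫ s in t₂..t₃, f s) - (f t₃ - f t₂) * (∫ s in t₁..t₂, f s) ≥
      (m ^ 3 / (2 * M)) * (min (t₂ - t₁) (t₃ - t₂)) ^ 3 * εbar := by
  have hM : 0 < M := hm.trans_le hmM
  have ha : 0 < t₂ - t₁ := sub_pos.2 h12
  have hb : 0 < t₃ - t₂ := sub_pos.2 h23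
  have ht₁ : t₁ ∈ Icc t₁ t₃ := ⟨le_rfl, (h12.trans h23).le⟩
  have ht₂ : t₂ ∈ Icc t₁ t₃ := ⟨h12.le, h23.le⟩
  have ht₃ : t₃ ∈ Icc t₁ t₃ := ⟨(h12.trans h23).le, le_rfl⟩
  have hinc := (convex_Icc t₁ t₃).mul_sub_le_image_sub_of_le_hasDerivAt hderiv
    fun t ht => (hbound t ht).1
  have hΔ₁ := hinc t₁ ht₁ t₂ ht₂ h12.le
  have hΔ₂ := hinc t₂ ht₂ t₃ ht₃ h23.le
  have hΔ₁pos : 0 < f t₂ - f t₁ := (mul_pos hm ha).trans_le hΔ₁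
  have hΔ₂pos : 0 < f t₃ - f t₂ := (mul_pos hm hb).trans_le hΔ₂
  have hgap := mul_div_le_integral_ratio_gap h12 h23 hm hderiv hbound (hf0 t₁ ht₁) hεle
  rw [ge_iff_le]
  calc m ^ 3 / (2 * M) * min (t₂ - t₁) (t₃ - t₂) ^ 3 * εbar
      ≤ m ^ 3 / (2 * M) * ((t₂ - t₁) ^ 2 * (t₃ - t₂)) * εbar := by
        gcongr
        exact min_pow_three_le_sq_mul ha.le hb.le
    _ = m * (t₂ - t₁) * (m * (t₃ - t₂)) * (m * (t₂ - t₁) * εbar / (2 * M)) := by ring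
    _ ≤ (f t₂ - f t₁) * (f t₃ - f t₂) *
        ((∫ s in t₂..t₃, f s) / (f t₃ - f t₂) - (∫ s in t₁..t₂, f s) / (f t₂ - f t₁)) :=
      mul_le_mul (mul_le_mul hΔ₁ hΔ₂ (by positivity) hΔ₁pos.le) hgap (by positivity)
        (mul_pos hΔ₁pos hΔ₂pos).le
    _ = (f t₂ - f t₁) * (∫ s in t₂..t₃, f s) - (f t₃ - f t₂) * (∫ s in t₁..t₂, f s) := by
        field_simp

/-- The core Wronskian-type inequality behind Lemma 1 of the paper. -/
theorem wronskian_lower_bound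
    (t₁ t₂ t₃ m M εbar : ℝ) (h12 : t₁ < t₂) (h23 : t₂ < t₃)
    (hm : 0 < m) (hmM : m ≤ M)
    (f f' : ℝ → ℝ)
    (hf0 : ∀ t ∈ Icc t₁ t₃, 0 ≤ f t)
    (hmono : StrictMonoOn f (Icc t₁ t₃))
    (hderiv : ∀ t ∈ Icc t₁ t₃, HasDerivAt f (f' t) t)
    (hbound : ∀ t ∈ Icc t₁ t₃, m ≤ f' t ∧ f' t ≤ M)
    (hεnn : 0 ≤ εbar)
    (hεle : εbar ≤ (t₃ - t₂) / (t₂ - t₁) + 2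
        - 2 * f t₁ * (M - m) / (m ^ 2 * (t₂ - t₁)) - M ^ 2 / m ^ 2) :
    (f t₂ - f t₁) * (∫ s in t₂..t₃, f s) - (f t₃ - f t₂) * (∫ s in t₁..t₂, f s) ≥
      (m ^ 3 / (2 * M)) * (min (t₂ - t₁) (t₃ - t₂)) ^ 3 * εbar :=
  wronskian_lower_bound_general t₁ t₂ t₃ m M εbar h12 h23 hm hmM f f' hf0 hderiv hbound hεnn hεle
end
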